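/- Let G be a planar graph containing a vertex v of degree 5 whose five neighbours form a cycle. Then the number of edges of G joining a neighbour of v to a vertex outside the closed neighbourhood of v is at most 2n−2, where n = |V(G)|. -/

import Mathlib

attribute [local instance] Classical.propDecidable

open SimpleGraph

/-- Subdividing the edge `uv` of `H`: remove `uv`, add a new vertex joined to `u` and `v`. -/
def SubdivideEdge {W : Type} (H : SimpleGraph W) (u v : W) : SimpleGraph (W ⊕ Unit) :=
  SimpleGraph.fromRel (fun a b =>
    (∃ x y : W, a = Sum.inl x ∧ b = Sum.inl y ∧ H.Adj x y ∧
      ¬(x = u ∧ y = v) ∧ ¬(x = v ∧ y = u)) ∨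
    (a = Sum.inl u ∧ b = Sum.inr ()) ∨ (a = Sum.inl v ∧ b = Sum.inr ()))

/-- `Subdivision G H` : `H` is obtained from `G` by repeatedly subdividing edges. -/
inductive Subdivision {V : Type} (G : SimpleGraph V) : ∀ {W : Type}, SimpleGraph W → Prop
  | base : Subdivision G G
  | step {W : Type} {H : SimpleGraph W} {u v : W} :
      Subdivision G H → H.Adj u v → Subdivision G (SubdivideEdge H u v)

/-- `G` contains a subdivision of `K` as a subgraph. -/
def ContainsSubdivision {V V₀ : Type} (G : SimpleGraph V) (K : SimpleGraph V₀) : Prop :=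
  ∃ (W : Type) (H : SimpleGraph W), Subdivision K H ∧
    ∃ f : W ↪ V, ∀ a b : W, H.Adj a b → G.Adj (f a) (f b)

/-- Planarity, via Kuratowski's characterization: no subdivision of `K₅` or `K₃,₃`. -/
def SimpleGraph.Planar {V : Type} (G : SimpleGraph V) : Prop :=
  ¬ ContainsSubdivision G (completeGraph (Fin 5)) ∧
  ¬ ContainsSubdivision G (completeBipartiteGraph (Fin 3) (Fin 3))

/-- A maximal planar graph: a simple planar graph on `n ≥ 3` vertices with `3n - 6` edges. -/
def MaximalPlanar {V : Type} [Fintype V] (G : SimpleGraph V) : Prop :=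
  G.Planar ∧ 3 ≤ Fintype.card V ∧ G.edgeSet.ncard = 3 * Fintype.card V - 6


lemma K33_free {V : Type} (G : SimpleGraph V) (hP : G.Planar)
    (x y : Fin 3 → V) (hx : Function.Injective x) (hy : Function.Injective y)
    (hxy : ∀ i j, x i ≠ y j) (hadj : ∀ i j, G.Adj (x i) (y j)) : False := by
  apply hP.2
  refine ⟨_, _, Subdivision.base, ⟨⟨Sum.elim x y, ?_⟩, ?_⟩⟩
  · intro a b hab
    cases a with
    | inl i => cases b with
      | inl j => simp only [Sum.elim_inl] at hab; exact congrArg Sum.inl (hx hab)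
      | inr j => exact absurd hab (hxy i j)
    | inr i => cases b with
      | inl j => exact absurd hab.symm (hxy j i)
      | inr j => simp only [Sum.elim_inr] at hab; exact congrArg Sum.inr (hy hab)
  · intro a b hab
    cases a <;> cases b <;> simp_all [completeBipartiteGraph]
    all_goals first | exact hadj _ _ | exact (hadj _ _).symm

/-- If a planar graph `G` on `n` vertices has a vertex `v` of degree `5` whose neighbours
form a cycle, then at most `2n - 2` edges of `G` join a neighbour of `v` to a vertex
outside the closed neighbourhood of `v`. -/
theorem stmt6 {V : Type} [Fintype V] (G : SimpleGraph V) (hP : G.Planar)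
    (v : V) (hdeg : G.degree v = 5)
    (c : Fin 5 → V) (hc_inj : Function.Injective c) (hc_nb : ∀ i, G.Adj v (c i))
    (hc_all : ∀ w : V, G.Adj v w → ∃ i, c i = w)
    (hc_cyc : ∀ i : Fin 5, G.Adj (c i) (c (i + 1))) :
    (G.edgeFinset.filter fun e => ∃ a b : V, e = s(a, b) ∧
        a ∈ G.neighborFinset v ∧ b ≠ v ∧ b ∉ G.neighborFinset v).card ≤ 2 * Fintype.card V - 2 := by
  classical
  set N := G.neighborFinset v with hN
  have hcN : ∀ i, c i ∈ N := fun i => by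
    rw [hN, SimpleGraph.mem_neighborFinset]; exact hc_nb i
  have hvN : v ∉ N := by rw [hN, SimpleGraph.mem_neighborFinset]; exact G.irrefl
  have hNcard : N.card = 5 := by rw [hN, G.card_neighborFinset_eq_degree, hdeg]
  set S : Finset V := Finset.univ.filter (fun w => w ≠ v ∧ w ∉ N) with hS
  set nb : V → Finset (Fin 5) := fun w => Finset.univ.filter (fun i => G.Adj (c i) w) with hnb
  -- key: no two outside vertices share a triple of cycle-neighbours
  have key : ∀ w₁ ∈ S, ∀ w₂ ∈ S, w₁ ≠ w₂ → ∀ t : Finset (Fin 5), t.card = 3 →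
      t ⊆ nb w₁ → t ⊆ nb w₂ → False := by
    intro w₁ hw₁ w₂ hw₂ hne t ht ht1 ht2
    rw [hS, Finset.mem_filter] at hw₁ hw₂
    obtain ⟨i, j, k, hij, hik, hjk, rfl⟩ := Finset.card_eq_three.mp ht
    have hmem : ∀ m ∈ ({i, j, k} : Finset (Fin 5)), G.Adj (c m) w₁ ∧ G.Adj (c m) w₂ := by
      intro m hm
      have h1 := ht1 hm; have h2 := ht2 hm
      rw [hnb, Finset.mem_filter] at h1 h2
      exact ⟨h1.2, h2.2⟩
    have hcv : ∀ m : Fin 5, c m ≠ v := fun m => (G.ne_of_adj (hc_nb m)).symm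
    have hcw1 : ∀ m : Fin 5, c m ≠ w₁ := fun m h => hw₁.2.2 (h ▸ hcN m)
    have hcw2 : ∀ m : Fin 5, c m ≠ w₂ := fun m h => hw₂.2.2 (h ▸ hcN m)
    have hi : _ := hmem i (by simp)
    have hj : _ := hmem j (by simp)
    have hk : _ := hmem k (by simp)
    refine K33_free G hP ![c i, c j, c k] ![v, w₁, w₂] ?_ ?_ ?_ ?_
    · intro a b hab
      fin_cases a <;> fin_cases b <;> simp_all [Matrix.cons_val_zero, Matrix.cons_val_one] <;>
        first
        | rfl
        | (exfalso; first
            | exact hij (hc_inj hab) | exact hik (hc_inj hab) | exact hjk (hc_inj hab)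
            | exact hij (hc_inj hab.symm) | exact hik (hc_inj hab.symm) | exact hjk (hc_inj hab.symm))
    · intro a b hab
      fin_cases a <;> fin_cases b <;> simp_all
    · intro a b
      fin_cases a <;> fin_cases b <;>
        simp only [Matrix.cons_val_zero, Matrix.cons_val_one, Matrix.head_cons,
          Matrix.cons_val_two, Matrix.tail_cons] <;>
        first | exact hcv _ | exact hcw1 _ | exact hcw2 _
    · intro a b
      fin_cases a <;> fin_cases b
      · exact (hc_nb i).symm
      · exact hi.1
      · exact hi.2
      · exact (hc_nb j).symm
      · exact hj.1
      · exact hj.2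
      · exact (hc_nb k).symm
      · exact hk.1
      · exact hk.2
  -- rewrite the edge set as a biUnion over outside vertices
  have hbi : (G.edgeFinset.filter fun e => ∃ a b : V, e = s(a, b) ∧
      a ∈ N ∧ b ≠ v ∧ b ∉ N) =
      S.biUnion (fun w => (nb w).image (fun i => s(c i, w))) := by
    ext e
    simp only [Finset.mem_filter, SimpleGraph.mem_edgeFinset, Finset.mem_biUnion,
      Finset.mem_image]
    constructor
    · rintro ⟨he, a, b, rfl, haN, hbv, hbN⟩
      have hav : G.Adj v a := by
        rw [hN, SimpleGraph.mem_neighborFinset] at haN; exact haN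
      obtain ⟨i, rfl⟩ := hc_all a hav
      have hadj : G.Adj (c i) b := (SimpleGraph.mem_edgeSet G).mp he
      refine ⟨b, ?_, i, ?_, rfl⟩
      · rw [hS, Finset.mem_filter]; exact ⟨Finset.mem_univ _, hbv, hbN⟩
      · rw [hnb]; simp only [Finset.mem_filter]; exact ⟨Finset.mem_univ _, hadj⟩
    · rintro ⟨w, hw, i, hi, rfl⟩
      rw [hS, Finset.mem_filter] at hw
      rw [hnb] at hi; simp only [Finset.mem_filter] at hi
      exact ⟨(SimpleGraph.mem_edgeSet G).mpr hi.2, c i, w, rfl, hcN i, hw.2.1, hw.2.2⟩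
  rw [hbi]
  have hdisj : ∀ w₁ ∈ S, ∀ w₂ ∈ S, w₁ ≠ w₂ →
      Disjoint ((nb w₁).image (fun i => s(c i, w₁))) ((nb w₂).image (fun i => s(c i, w₂))) := by
    intro w₁ hw₁ w₂ hw₂ hne
    rw [Finset.disjoint_left]
    rintro e he1 he2
    simp only [Finset.mem_image] at he1 he2
    obtain ⟨i, hi, rfl⟩ := he1
    obtain ⟨j, hj, hij⟩ := he2
    rw [hS, Finset.mem_filter] at hw₁ hw₂
    rcases Sym2.eq_iff.mp hij with ⟨_, h⟩ | ⟨h, _⟩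
    · exact hne h.symm
    · exact hw₁.2.2 (h ▸ hcN j)
  rw [Finset.card_biUnion hdisj]
  have himg : ∀ w ∈ S, ((nb w).image (fun i => s(c i, w))).card = (nb w).card := by
    intro w hw
    rw [hS, Finset.mem_filter] at hw
    apply Finset.card_image_of_injOn
    intro i _ j _ hij
    rcases Sym2.eq_iff.mp hij with ⟨h, _⟩ | ⟨h, _⟩
    · exact hc_inj h
    · exact absurd (h ▸ hcN i) hw.2.2
  rw [Finset.sum_congr rfl himg]
  -- bound each term and the excess over 2 by triples
  have hstep : ∀ w ∈ S, (nb w).card ≤ 2 + ((nb w).powersetCard 3).card := by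
    intro w _
    rw [Finset.card_powersetCard]
    have hd : (nb w).card ≤ 5 := by
      have := Finset.card_le_univ (nb w)
      simpa using this
    interval_cases h : (nb w).card <;> decide
  have htriple : ∑ w ∈ S, ((nb w).powersetCard 3).card ≤ 10 := by
    have hdisj2 : ∀ w₁ ∈ S, ∀ w₂ ∈ S, w₁ ≠ w₂ →
        Disjoint ((nb w₁).powersetCard 3) ((nb w₂).powersetCard 3) := by
      intro w₁ hw₁ w₂ hw₂ hne
      rw [Finset.disjoint_left]
      intro t ht1 ht2
      rw [Finset.mem_powersetCard] at ht1 ht2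
      exact key w₁ hw₁ w₂ hw₂ hne t ht1.2 ht1.1 ht2.1
    rw [← Finset.card_biUnion hdisj2]
    calc (S.biUnion fun w => (nb w).powersetCard 3).card
        ≤ ((Finset.univ : Finset (Fin 5)).powersetCard 3).card := by
          apply Finset.card_le_card
          intro t ht
          rw [Finset.mem_biUnion] at ht
          obtain ⟨w, _, ht⟩ := ht
          rw [Finset.mem_powersetCard] at ht ⊢
          exact ⟨Finset.subset_univ _, ht.2⟩
      _ = 10 := by rw [Finset.card_powersetCard]; decide
  have hScard : S.card = Fintype.card V - 6 ∧ 6 ≤ Fintype.card V := by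
    have hins : (insert v N).card = 6 := by
      rw [Finset.card_insert_of_notMem hvN, hNcard]
    have hSeq : S = Finset.univ \ insert v N := by
      ext w
      rw [hS]
      simp only [Finset.mem_filter, Finset.mem_sdiff, Finset.mem_insert, Finset.mem_univ,
        true_and]
      tauto
    constructor
    · rw [hSeq, Finset.card_sdiff_of_subset (Finset.subset_univ _), hins, Finset.card_univ]
    · rw [← hins, ← Finset.card_univ]
      exact Finset.card_le_card (Finset.subset_univ _)
  calc ∑ w ∈ S, (nb w).card
      ≤ ∑ w ∈ S, (2 + ((nb w).powersetCard 3).card) := Finset.sum_le_sum hstep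
    _ = 2 * S.card + ∑ w ∈ S, ((nb w).powersetCard 3).card := by
        rw [Finset.sum_add_distrib, Finset.sum_const, smul_eq_mul, mul_comm]
    _ ≤ 2 * (Fintype.card V - 6) + 10 := by
        rw [hScard.1]; omega
    _ ≤ 2 * Fintype.card V - 2 := by
        have := hScard.2; omega
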